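/- Define A : 𝕆 → End_ℝ(𝕆 ⊕ 𝕆) by A(q)(x, y) = (q·y, −q̄·x). Then for all p, q ∈ 𝕆, A(p) ∘ A(q) + A(q) ∘ A(p) = −2⟨p,q⟩ · id. In particular A(q)² = −|q|² · id, so A induces a representation of the Clifford algebra Cl(ℝ⁸, −|·|²) on the 16-dimensional real vector space 𝕆 ⊕ 𝕆. -/

import Mathlib

noncomputable section

open Quaternion

/-- The octonions, realized via the Cayley–Dickson construction on the quaternions. -/
def Octonion : Type := ℍ[ℝ] × ℍ[ℝ]

namespace Octonion

instance : AddCommGroup Octonion := inferInstanceAs (AddCommGroup (ℍ[ℝ] × ℍ[ℝ]))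
instance : Module ℝ Octonion := inferInstanceAs (Module ℝ (ℍ[ℝ] × ℍ[ℝ]))

def fst (x : Octonion) : ℍ[ℝ] := Prod.fst (x : ℍ[ℝ] × ℍ[ℝ])
def snd (x : Octonion) : ℍ[ℝ] := Prod.snd (x : ℍ[ℝ] × ℍ[ℝ])
def mk (a b : ℍ[ℝ]) : Octonion := ((a, b) : ℍ[ℝ] × ℍ[ℝ])

/-- Cayley–Dickson multiplication. -/
instance : Mul Octonion :=
  ⟨fun x y => mk (fst x * fst y - star (snd y) * snd x) (snd y * fst x + snd x * star (fst y))⟩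

instance : One Octonion := ⟨mk 1 0⟩

/-- Octonionic conjugation. -/
def conj (x : Octonion) : Octonion := mk (star (fst x)) (-(snd x))

/-- Real part. -/
def re (x : Octonion) : ℝ := (fst x).re

/-- The Euclidean inner product ⟨p,q⟩ = Re(p q̄). -/
def inner (x y : Octonion) : ℝ := re (x * conj y)

/-- The squared norm |x|². -/
def normSq (x : Octonion) : ℝ := inner x x

/-- The standard basis e₀ = 1, e₁, …, e₇. -/
def e : Fin 8 → Octonion := fun i =>
  match i with
  | 0 => mk 1 0
  | 1 => mk ⟨0,1,0,0⟩ 0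
  | 2 => mk ⟨0,0,1,0⟩ 0
  | 3 => mk ⟨0,0,0,1⟩ 0
  | 4 => mk 0 1
  | 5 => mk 0 ⟨0,1,0,0⟩
  | 6 => mk 0 ⟨0,0,1,0⟩
  | 7 => mk 0 ⟨0,0,0,1⟩

/-- The associator [a,b,c] = (ab)c − a(bc). -/
def associator (a b c : Octonion) : Octonion := a * b * c - a * (b * c)

end Octonion

open Octonion in
/-- The Clifford representation map A(q)(x, y) = (q·y, −q̄·x). -/
def cliffordMap (q : Octonion) : Octonion × Octonion → Octonion × Octonion :=
  fun v => (q * v.2, -(Octonion.conj q * v.1))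

/- In block form A(q) = [[0, L_q], [-L_q̄, 0]], so A(p)A(q) + A(q)A(p) is block diagonal with blocks
-(L_p L_q̄ + L_q L_p̄) and -(L_p̄ L_q + L_q̄ L_p). Both equal -2⟨p,q⟩ by the polarized form of the
identity q(q̄x) = |q|²x of the alternative algebra 𝕆, which is checked in Cayley–Dickson coordinates;
the second block is the first one for p̄, q̄. -/

namespace Octonion

theorem fst_mul (x y : Octonion) : fst (x * y) = fst x * fst y - star (snd y) * snd x := rfl
theorem snd_mul (x y : Octonion) : snd (x * y) = snd y * fst x + snd x * star (fst y) := rfl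
theorem fst_conj (x : Octonion) : fst (conj x) = star (fst x) := rfl
theorem snd_conj (x : Octonion) : snd (conj x) = -snd x := rfl
theorem fst_add (x y : Octonion) : fst (x + y) = fst x + fst y := rfl
theorem snd_add (x y : Octonion) : snd (x + y) = snd x + snd y := rfl
theorem fst_neg (x : Octonion) : fst (-x) = -fst x := rfl
theorem snd_neg (x : Octonion) : snd (-x) = -snd x := rfl
theorem fst_smul (r : ℝ) (x : Octonion) : fst (r • x) = r • fst x := rfl
theorem snd_smul (r : ℝ) (x : Octonion) : snd (r • x) = r • snd x := rfl

@[ext]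
theorem ext {x y : Octonion} (h₁ : fst x = fst y) (h₂ : snd x = snd y) : x = y := Prod.ext h₁ h₂

theorem inner_eq (x y : Octonion) :
    inner x y = (fst x * star (fst y) + star (snd y) * snd x).re := by
  rw [inner, re, fst_mul, snd_conj, fst_conj, star_neg, neg_mul, sub_neg_eq_add]

protected theorem mul_neg (x y : Octonion) : x * -y = -(x * y) := by
  ext <;> simp only [fst_mul, snd_mul, fst_neg, snd_neg, star_neg] <;> noncomm_ring

theorem conj_conj (x : Octonion) : conj (conj x) = x := by
  ext <;> simp only [fst_conj, snd_conj, star_star, neg_neg]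

theorem inner_conj_conj (x y : Octonion) : inner (conj x) (conj y) = inner x y := by
  simp only [inner_eq, fst_conj, snd_conj, star_neg, neg_mul_neg, Quaternion.re_add,
    Quaternion.re_mul, Quaternion.re_star, Quaternion.imI_star, Quaternion.imJ_star,
    Quaternion.imK_star]

theorem mul_conj_mul_add_mul_conj_mul (p q x : Octonion) :
    p * (conj q * x) + q * (conj p * x) = (2 * inner p q) • x := by
  ext <;>
    simp only [fst_add, snd_add, fst_mul, snd_mul, fst_conj, snd_conj, fst_smul, snd_smul,
      inner_eq, Quaternion.re_mul, Quaternion.imI_mul, Quaternion.imJ_mul,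
      Quaternion.imK_mul, Quaternion.re_add, Quaternion.imI_add, Quaternion.imJ_add,
      Quaternion.imK_add, Quaternion.re_sub, Quaternion.imI_sub, Quaternion.imJ_sub,
      Quaternion.imK_sub, Quaternion.re_neg, Quaternion.imI_neg, Quaternion.imJ_neg,
      Quaternion.imK_neg, Quaternion.re_star, Quaternion.imI_star, Quaternion.imJ_star,
      Quaternion.imK_star, Quaternion.re_smul, Quaternion.imI_smul, Quaternion.imJ_smul,
      Quaternion.imK_smul, smul_eq_mul] <;>
    ring

theorem conj_mul_mul_add_conj_mul_mul (p q x : Octonion) :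
    conj p * (q * x) + conj q * (p * x) = (2 * inner p q) • x := by
  simpa only [conj_conj, inner_conj_conj] using mul_conj_mul_add_mul_conj_mul (conj p) (conj q) x

end Octonion

theorem cliffordMap_anticomm_apply (p q : Octonion) (v : Octonion × Octonion) :
    cliffordMap p (cliffordMap q v) + cliffordMap q (cliffordMap p v) =
      (-(2 * Octonion.inner p q)) • v := by
  refine Prod.ext ?_ ?_
  · change p * -(Octonion.conj q * v.1) + q * -(Octonion.conj p * v.1) = _
    rw [Octonion.mul_neg, Octonion.mul_neg, ← neg_add,
      Octonion.mul_conj_mul_add_mul_conj_mul, neg_smul, Prod.fst_neg, Prod.smul_fst]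
  · change -(Octonion.conj p * (q * v.2)) + -(Octonion.conj q * (p * v.2)) = _
    rw [← neg_add, Octonion.conj_mul_mul_add_conj_mul_mul, neg_smul, Prod.snd_neg,
      Prod.smul_snd]

/-- A(p)∘A(q) + A(q)∘A(p) = −2⟨p,q⟩·id, and in particular A(q)² = −|q|²·id. -/
theorem cliffordMap_anticommutation :
    (∀ p q : Octonion,
      (fun v : Octonion × Octonion => cliffordMap p (cliffordMap q v) + cliffordMap q (cliffordMap p v)) =
        (fun v : Octonion × Octonion => (-(2 * Octonion.inner p q)) • v)) ∧
    (∀ q : Octonion,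
      (fun v : Octonion × Octonion => cliffordMap q (cliffordMap q v)) =
        (fun v : Octonion × Octonion => (-Octonion.normSq q) • v)) := by
  refine ⟨fun p q => funext (cliffordMap_anticomm_apply p q), fun q => funext fun v => ?_⟩
  have h : (2 : ℝ) • cliffordMap q (cliffordMap q v) = (2 : ℝ) • (-Octonion.normSq q) • v := by
    rw [two_smul, cliffordMap_anticomm_apply, smul_smul, mul_neg, Octonion.normSq]
  exact smul_right_injective _ two_ne_zero h
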